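/- (Fractional differential inequality for the Burgers gradient functional.) Let 0 < α < 1, ν > 0, M > 0, L > 0, and let u ∈ C^{1,3}_{t,x}([0,T]×[0,L]) solve ∂^α_{+0,t}u + u u_x = ν u_{xx} on (0,L)×(0,T] with |u(x,t)| ≤ M on [0,L]×[0,T], and assume that for each fixed x ∈ [0,L] the function t ↦ u(x,t) is monotone on [0,T]. Let φ ∈ C³([0,L]) with φ(x) ≥ 0 on [0,L] and φ not identically zero, and set θ₁ := (M⁴/(4ν²))∫₀^L φ(x) dx + Mν∫₀^L |φ‴(x)| dx, θ₂ := ∫₀^L φ(x) dx, v(x,t) = −u_x(x,t) − u(x,t)²/(2ν), F(t) = ∫₀^L v(x,t)φ(x) dx, and Φ(t) = −ν[(u_{xx}φ − u_xφ′ + uφ″)(L,t) − (u_{xx}φ − u_xφ′ + uφ″)(0,t)]. Then for every t ∈ (0,T], ∂^α_{+0,t} F(t) ≥ θ₂^{−1} F(t)² + Φ(t) − θ₁. -/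

import Mathlib

open Set MeasureTheory Filter

/-- Caputo fractional derivative of order α at base point 0 (in one real variable). -/
noncomputable def caputo (α : ℝ) (f : ℝ → ℝ) (t : ℝ) : ℝ :=
  (1 / Real.Gamma (1 - α)) * ∫ s in (0:ℝ)..t, (t - s) ^ (-α) * deriv f s

/-- Partial derivative in the first (spatial) variable. -/
noncomputable def pdX (u : ℝ → ℝ → ℝ) : ℝ → ℝ → ℝ := fun x t => deriv (fun y => u y t) x

/-- Partial derivative in the second (time) variable. -/
noncomputable def pdT (u : ℝ → ℝ → ℝ) : ℝ → ℝ → ℝ := fun x t => deriv (fun s => u x s) t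

/-- Caputo fractional derivative in the time variable (x fixed). -/
noncomputable def capT (α : ℝ) (u : ℝ → ℝ → ℝ) (x t : ℝ) : ℝ := caputo α (fun s => u x s) t

/-- u belongs to C^{1,n}_{t,x}([0,T] x [0,L]): the spatial derivatives up to order n and
their first time derivatives exist and are continuous on the closed rectangle. -/
def CReg (n : ℕ) (u : ℝ → ℝ → ℝ) (L T : ℝ) : Prop :=
  (∀ k ≤ n, ContinuousOn (fun p : ℝ × ℝ => (pdX^[k] u) p.1 p.2) (Icc 0 L ×ˢ Icc 0 T)) ∧
  (∀ k ≤ n, ContinuousOn (fun p : ℝ × ℝ => pdT (pdX^[k] u) p.1 p.2) (Icc 0 L ×ˢ Icc 0 T)) ∧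
  (∀ k < n, ∀ x ∈ Icc (0:ℝ) L, ∀ t ∈ Icc (0:ℝ) T, DifferentiableAt ℝ (fun y => (pdX^[k] u) y t) x) ∧
  (∀ k ≤ n, ∀ x ∈ Icc (0:ℝ) L, ∀ t ∈ Icc (0:ℝ) T, DifferentiableAt ℝ (fun s => (pdX^[k] u) x s) t)

/-- φ belongs to C^n([0,L]). -/
def Csp (n : ℕ) (φ : ℝ → ℝ) (L : ℝ) : Prop :=
  (∀ k < n, ∀ x ∈ Icc (0:ℝ) L, DifferentiableAt ℝ (deriv^[k] φ) x) ∧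
  ContinuousOn (deriv^[n] φ) (Icc 0 L)

/-!
Differentiating the equation in `x` gives `∂^α u_x`, because the Caputo derivative commutes
with `∂ₓ` (symmetry of the mixed partials `u_xt = u_tx`). Since `t ↦ u(x,t)` is monotone,
`∂^α (u²) ≤ 2 u ∂^α u`. Inserting both into `∂^α v = -∂^α u_x - ∂^α (u²) / (2ν)` yields the
pointwise bound `∂^α v ≥ v² - u⁴/(4ν²) - ν u_xxx`. Multiply by `φ ≥ 0` and integrate over
`[0, L]`; by Fubini the left side becomes `∂^α F`. On the right, `∫ v² φ ≥ F² / θ₂` by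
Cauchy–Schwarz, integrating `u_xxx φ` by parts three times produces `Φ` and `∫ u φ'''`,
and `|u| ≤ M` bounds the remaining terms by `θ₁`.
-/

open Function

theorem intervalIntegrable_rpow_neg_sub {α : ℝ} (hα : α < 1) (t : ℝ) :
    IntervalIntegrable (fun s => (t - s) ^ (-α)) volume 0 t := by
  simpa using ((intervalIntegral.intervalIntegrable_rpow' (a := 0) (b := t)
    (r := -α) (by linarith)).comp_sub_left t).symm

theorem intervalIntegrable_rpow_neg_sub_mul {α t : ℝ} {g : ℝ → ℝ} (hα : α < 1) (ht : 0 ≤ t)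
    (hg : ContinuousOn g (Icc 0 t)) :
    IntervalIntegrable (fun s => (t - s) ^ (-α) * g s) volume 0 t :=
  (intervalIntegrable_rpow_neg_sub hα t).mul_continuousOn (by rwa [uIcc_of_le ht])

theorem HasDerivAt.nonneg_of_monotoneOn_Icc {g : ℝ → ℝ} {g' a b x : ℝ} (hx : x ∈ Ioo a b)
    (hd : HasDerivAt g g' x) (hg : MonotoneOn g (Icc a b)) : 0 ≤ g' := by
  have hacc : AccPt x (𝓟 (Icc a b)) := by
    simpa using (PerfectSpace.univ_preperfect x (mem_univ x)).nhds_inter (Icc_mem_nhds hx.1 hx.2)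
  exact hd.hasDerivWithinAt.nonneg_of_monotoneOn hacc hg

theorem HasDerivAt.nonpos_of_antitoneOn_Icc {g : ℝ → ℝ} {g' a b x : ℝ} (hx : x ∈ Ioo a b)
    (hd : HasDerivAt g g' x) (hg : AntitoneOn g (Icc a b)) : g' ≤ 0 := by
  simpa using hd.neg.nonneg_of_monotoneOn_Icc hx fun _ hy _ hz hyz => neg_le_neg (hg hy hz hyz)

section ParametricIntegral

variable {K : ℝ → ℝ} {a b c d : ℝ}

theorem hasDerivAt_integral_mul_of_continuousOn {f f' : ℝ → ℝ → ℝ} {p₀ : ℝ} (hab : a ≤ b)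
    (hp₀ : p₀ ∈ Ioo c d) (hK : IntervalIntegrable K volume a b)
    (hf : ∀ p ∈ Ioo c d, ContinuousOn (f p) (Icc a b))
    (hf' : ContinuousOn (uncurry f') (Icc c d ×ˢ Icc a b))
    (hderiv : ∀ s ∈ Ioo a b, ∀ p ∈ Ioo c d, HasDerivAt (fun q => f q s) (f' p s) p) :
    HasDerivAt (fun p => ∫ s in a..b, K s * f p s) (∫ s in a..b, K s * f' p₀ s) p₀ := by
  obtain ⟨C, hC⟩ := (isCompact_Icc.prod isCompact_Icc).exists_bound_of_continuousOn hf'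
  have hint : ∀ g : ℝ → ℝ, ContinuousOn g (Icc a b) →
      IntervalIntegrable (fun s => K s * g s) volume a b :=
    fun g hg => hK.mul_continuousOn (by rwa [uIcc_of_le hab])
  refine (intervalIntegral.hasDerivAt_integral_of_dominated_loc_of_deriv_le
    (F := fun p s => K s * f p s) (F' := fun p s => K s * f' p s)
    (Ioo_mem_nhds hp₀.1 hp₀.2) (bound := fun s => ‖K s‖ * C) ?_
    (hint _ (hf p₀ hp₀)) (hint _ (hf'.uncurry_left p₀ (Ioo_subset_Icc_self hp₀))).def'.1 ?_
    (hK.norm.mul_const C) ?_).2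
  · filter_upwards [Ioo_mem_nhds hp₀.1 hp₀.2] with p hp using (hint _ (hf p hp)).def'.1
  · refine ae_of_all _ fun s hs p hp => ?_
    rw [uIoc_of_le hab] at hs
    rw [norm_mul]
    exact mul_le_mul_of_nonneg_left
      (hC (p, s) ⟨Ioo_subset_Icc_self hp, Ioc_subset_Icc_self hs⟩) (norm_nonneg _)
  · filter_upwards [volume.ae_ne b] with s hsb hs p hp
    rw [uIoc_of_le hab] at hs
    exact (hderiv s ⟨hs.1, lt_of_le_of_ne hs.2 hsb⟩ p hp).const_mul (K s)

theorem continuousOn_integral_mul_of_continuousOn {g : ℝ → ℝ → ℝ} (hab : a ≤ b)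
    (hK : IntervalIntegrable K volume a b) (hg : ContinuousOn (uncurry g) (Icc c d ×ˢ Icc a b)) :
    ContinuousOn (fun p => ∫ s in a..b, K s * g p s) (Icc c d) := by
  obtain ⟨C, hC⟩ := (isCompact_Icc.prod isCompact_Icc).exists_bound_of_continuousOn hg
  intro p hp
  refine intervalIntegral.continuousWithinAt_of_dominated_interval
    (bound := fun s => ‖K s‖ * C) ?_ ?_ (hK.norm.mul_const C) ?_
  · filter_upwards [self_mem_nhdsWithin] with q hq
    exact (hK.mul_continuousOn (by rw [uIcc_of_le hab]; exact hg.uncurry_left q hq)).def'.1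
  · filter_upwards [self_mem_nhdsWithin] with q hq
    refine ae_of_all _ fun s hs => ?_
    rw [uIoc_of_le hab] at hs
    rw [norm_mul]
    exact mul_le_mul_of_nonneg_left (hC (q, s) ⟨hq, Ioc_subset_Icc_self hs⟩) (norm_nonneg _)
  · refine ae_of_all _ fun s hs => ?_
    rw [uIoc_of_le hab] at hs
    exact continuousWithinAt_const.mul
      ((hg.uncurry_right s (Ioc_subset_Icc_self hs)).continuousWithinAt hp)

theorem intervalIntegral_integral_swap_mul {φ : ℝ → ℝ} {g : ℝ → ℝ → ℝ} (hab : a ≤ b)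
    (hcd : c ≤ d) (hK : IntervalIntegrable K volume a b) (hφ : IntervalIntegrable φ volume c d)
    (hg : ContinuousOn (uncurry g) (Icc a b ×ˢ Icc c d)) :
    ∫ s in a..b, ∫ x in c..d, K s * (φ x * g s x)
      = ∫ x in c..d, ∫ s in a..b, K s * (φ x * g s x) := by
  obtain ⟨C, hC⟩ := (isCompact_Icc.prod isCompact_Icc).exists_bound_of_continuousOn hg
  simp only [intervalIntegral.integral_of_le hab, intervalIntegral.integral_of_le hcd]
  rw [intervalIntegrable_iff_integrableOn_Ioc_of_le hab] at hK
  rw [intervalIntegrable_iff_integrableOn_Ioc_of_le hcd] at hφ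
  refine integral_integral_swap ?_
  have hsub : Ioc a b ×ˢ Ioc c d ⊆ Icc a b ×ˢ Icc c d :=
    prod_mono Ioc_subset_Icc_self Ioc_subset_Icc_self
  have hg_meas : AEStronglyMeasurable (uncurry g)
      ((volume.restrict (Ioc a b)).prod (volume.restrict (Ioc c d))) := by
    rw [Measure.prod_restrict]
    exact (hg.mono hsub).aestronglyMeasurable (measurableSet_Ioc.prod measurableSet_Ioc)
  have hmem : ∀ᵐ q ∂(volume.restrict (Ioc a b)).prod (volume.restrict (Ioc c d)),
      q ∈ Ioc a b ×ˢ Ioc c d := by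
    rw [Measure.prod_restrict]
    exact ae_restrict_mem (measurableSet_Ioc.prod measurableSet_Ioc)
  refine Integrable.mono' ((hK.norm.mul_prod hφ.norm).mul_const C)
    (hK.aestronglyMeasurable.comp_fst.mul (hφ.aestronglyMeasurable.comp_snd.mul hg_meas)) ?_
  filter_upwards [hmem] with q hq
  simp only [uncurry, norm_mul]
  rw [mul_assoc]
  exact mul_le_mul_of_nonneg_left (mul_le_mul_of_nonneg_left (hC q (hsub hq)) (norm_nonneg _))
    (norm_nonneg _)

end ParametricIntegral

theorem ContinuousOn.uncurry_flip {f : ℝ → ℝ → ℝ} {s t : Set ℝ}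
    (h : ContinuousOn (uncurry f) (s ×ˢ t)) : ContinuousOn (uncurry (flip f)) (t ×ˢ s) :=
  h.comp continuous_swap.continuousOn fun _ hq => ⟨hq.2, hq.1⟩

section Caputo

variable {α t : ℝ}

theorem caputo_eq_of_hasDerivAt {f f' : ℝ → ℝ} (ht : 0 ≤ t)
    (hf : ∀ s ∈ Ioo 0 t, HasDerivAt f (f' s) s) :
    caputo α f t = 1 / Real.Gamma (1 - α) * ∫ s in (0:ℝ)..t, (t - s) ^ (-α) * f' s := by
  unfold caputo
  congr 1
  simp only [intervalIntegral.integral_of_le ht, integral_Ioc_eq_integral_Ioo]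
  exact setIntegral_congr_fun measurableSet_Ioo fun s hs => by rw [(hf s hs).deriv]

theorem caputo_neg (f : ℝ → ℝ) : caputo α (fun s => -f s) t = -caputo α f t := by
  simp [caputo]

theorem caputo_div_const (f : ℝ → ℝ) (c : ℝ) :
    caputo α (fun s => f s / c) t = caputo α f t / c := by
  simp only [caputo, deriv_div_const, mul_div_assoc', intervalIntegral.integral_div]

theorem caputo_sub {f g f' g' : ℝ → ℝ} (hα : α < 1) (ht : 0 ≤ t)
    (hf : ∀ s ∈ Ioo 0 t, HasDerivAt f (f' s) s) (hf' : ContinuousOn f' (Icc 0 t))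
    (hg : ∀ s ∈ Ioo 0 t, HasDerivAt g (g' s) s) (hg' : ContinuousOn g' (Icc 0 t)) :
    caputo α (fun s => f s - g s) t = caputo α f t - caputo α g t := by
  rw [caputo_eq_of_hasDerivAt (f := fun s => f s - g s) ht fun s hs => (hf s hs).sub (hg s hs),
    caputo_eq_of_hasDerivAt ht hf, caputo_eq_of_hasDerivAt ht hg, ← mul_sub,
    ← intervalIntegral.integral_sub (intervalIntegrable_rpow_neg_sub_mul hα ht hf')
      (intervalIntegrable_rpow_neg_sub_mul hα ht hg')]
  simp only [mul_sub]

/-- The difference of the two sides is `(2/Γ(1-α)) ∫ (t-s)^(-α) g'(s) (g(t) - g(s)) ds`, and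
monotonicity makes `g'(s)` and `g(t) - g(s)` of the same sign. -/
theorem caputo_sq_le {g g' : ℝ → ℝ} (hα : α < 1) (ht : 0 < t)
    (hg : ∀ s ∈ Icc 0 t, HasDerivAt g (g' s) s) (hg' : ContinuousOn g' (Icc 0 t))
    (hmono : MonotoneOn g (Icc 0 t) ∨ AntitoneOn g (Icc 0 t)) :
    caputo α (fun s => g s ^ 2) t ≤ 2 * g t * caputo α g t := by
  have hg_Ioo : ∀ s ∈ Ioo 0 t, HasDerivAt g (g' s) s := fun s hs => hg s (Ioo_subset_Icc_self hs)
  have hgc : ContinuousOn g (Icc 0 t) := fun s hs => (hg s hs).continuousAt.continuousWithinAt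
  have hsq : ∀ s ∈ Ioo 0 t, HasDerivAt (fun s => g s ^ 2) (2 * g s * g' s) s := fun s hs => by
    simpa using (hg_Ioo s hs).fun_pow 2
  have hdiff : 2 * g t * (∫ s in (0:ℝ)..t, (t - s) ^ (-α) * g' s)
      - ∫ s in (0:ℝ)..t, (t - s) ^ (-α) * (2 * g s * g' s)
      = ∫ s in (0:ℝ)..t, (t - s) ^ (-α) * (2 * (g' s * (g t - g s))) := by
    rw [← intervalIntegral.integral_const_mul, ← intervalIntegral.integral_sub
      ((intervalIntegrable_rpow_neg_sub_mul hα ht.le hg').const_mul _)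
      (intervalIntegrable_rpow_neg_sub_mul (g := fun s => 2 * g s * g' s) hα ht.le
        ((continuousOn_const.mul hgc).mul hg'))]
    exact intervalIntegral.integral_congr fun s _ => by ring
  have hsign : ∀ s ∈ Ioo 0 t, 0 ≤ g' s * (g t - g s) := fun s hs => by
    have hs' : s ∈ Icc 0 t := Ioo_subset_Icc_self hs
    rcases hmono with hm | hm
    · exact mul_nonneg ((hg_Ioo s hs).nonneg_of_monotoneOn_Icc hs hm)
        (sub_nonneg.2 (hm hs' (right_mem_Icc.2 ht.le) hs.2.le))
    · exact mul_nonneg_of_nonpos_of_nonpos ((hg_Ioo s hs).nonpos_of_antitoneOn_Icc hs hm)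
        (sub_nonpos.2 (hm hs' (right_mem_Icc.2 ht.le) hs.2.le))
  have hΓ : 0 < Real.Gamma (1 - α) := Real.Gamma_pos_of_pos (by linarith)
  rw [caputo_eq_of_hasDerivAt ht.le hsq, caputo_eq_of_hasDerivAt ht.le hg_Ioo, ← sub_nonneg,
    mul_left_comm, ← mul_sub, hdiff, intervalIntegral.integral_of_le ht.le,
    integral_Ioc_eq_integral_Ioo]
  refine mul_nonneg (by positivity) (setIntegral_nonneg measurableSet_Ioo fun s hs => ?_)
  exact mul_nonneg (Real.rpow_nonneg (sub_nonneg.2 hs.2.le) _) (mul_nonneg zero_le_two (hsign s hs))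

theorem caputo_integral_mul {w w' : ℝ → ℝ → ℝ} {φ : ℝ → ℝ} {L : ℝ} (hα : α < 1) (hL : 0 ≤ L)
    (ht : 0 < t) (hφ : IntervalIntegrable φ volume 0 L)
    (hw : ∀ s ∈ Ioo 0 t, ContinuousOn (fun x => w x s) (Icc 0 L))
    (hw' : ContinuousOn (uncurry w') (Icc 0 L ×ˢ Icc 0 t))
    (hderiv : ∀ x ∈ Icc 0 L, ∀ s ∈ Ioo 0 t, HasDerivAt (w x) (w' x s) s) :
    caputo α (fun s => ∫ x in (0:ℝ)..L, w x s * φ x) t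
      = ∫ x in (0:ℝ)..L, caputo α (w x) t * φ x := by
  simp only [mul_comm _ (φ _)]
  have hF : ∀ s ∈ Ioo 0 t, HasDerivAt (fun s => ∫ x in (0:ℝ)..L, φ x * w x s)
      (∫ x in (0:ℝ)..L, φ x * w' x s) s := fun s hs =>
    hasDerivAt_integral_mul_of_continuousOn hL hs hφ hw hw'.uncurry_flip
      fun x hx _ hσ => hderiv x (Ioo_subset_Icc_self hx) _ hσ
  have hpull_s : ∀ s, (t - s) ^ (-α) * ∫ x in (0:ℝ)..L, φ x * w' x s
      = ∫ x in (0:ℝ)..L, (t - s) ^ (-α) * (φ x * w' x s) := fun s =>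
    (intervalIntegral.integral_const_mul _ _).symm
  have hpull_x : ∀ x, ∫ s in (0:ℝ)..t, (t - s) ^ (-α) * (φ x * w' x s)
      = φ x * ∫ s in (0:ℝ)..t, (t - s) ^ (-α) * w' x s := fun x => by
    rw [← intervalIntegral.integral_const_mul]
    exact intervalIntegral.integral_congr fun s _ => by ring
  rw [caputo_eq_of_hasDerivAt ht.le hF]
  simp only [hpull_s]
  rw [intervalIntegral_integral_swap_mul (g := fun s x => w' x s) ht.le hL
    (intervalIntegrable_rpow_neg_sub hα t) hφ hw'.uncurry_flip]
  simp only [hpull_x]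
  rw [← intervalIntegral.integral_const_mul]
  refine intervalIntegral.integral_congr fun x hx => ?_
  rw [uIcc_of_le hL] at hx
  simp only [caputo_eq_of_hasDerivAt ht.le (hderiv x hx)]
  ring

theorem continuousOn_caputo {w w' : ℝ → ℝ → ℝ} {c d : ℝ} (hα : α < 1) (ht : 0 ≤ t)
    (hw' : ContinuousOn (uncurry w') (Icc c d ×ˢ Icc 0 t))
    (hderiv : ∀ x ∈ Icc c d, ∀ s ∈ Ioo 0 t, HasDerivAt (w x) (w' x s) s) :
    ContinuousOn (fun x => caputo α (w x) t) (Icc c d) :=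
  ((continuousOn_integral_mul_of_continuousOn ht (intervalIntegrable_rpow_neg_sub hα t)
    hw').const_smul (1 / Real.Gamma (1 - α))).congr fun x hx =>
      caputo_eq_of_hasDerivAt ht (hderiv x hx)

theorem hasDerivAt_capT_of_continuousOn {w : ℝ → ℝ → ℝ} {c d x : ℝ} (hα : α < 1) (ht : 0 ≤ t)
    (hx : x ∈ Ioo c d)
    (hwt : ContinuousOn (uncurry (pdT w)) (Icc c d ×ˢ Icc 0 t))
    (hwxt : ContinuousOn (uncurry (pdT (pdX w))) (Icc c d ×ˢ Icc 0 t))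
    (hmixed : ∀ s ∈ Ioo 0 t, ∀ y ∈ Ioo c d, HasDerivAt (fun y => pdT w y s) (pdT (pdX w) y s) y) :
    HasDerivAt (fun y => capT α w y t) (capT α (pdX w) x t) x :=
  (hasDerivAt_integral_mul_of_continuousOn ht hx (intervalIntegrable_rpow_neg_sub hα t)
    (fun y hy => hwt.uncurry_left y (Ioo_subset_Icc_self hy)) hwxt hmixed).const_mul _

end Caputo

theorem hasDerivAt_pdT_of_continuousOn_pdT_pdX {w : ℝ → ℝ → ℝ} {a b c d x s : ℝ}
    (hwx : ContinuousOn (uncurry (pdX w)) (Icc a b ×ˢ Icc c d))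
    (hwxt : ContinuousOn (uncurry (pdT (pdX w))) (Icc a b ×ˢ Icc c d))
    (hdx : ∀ y ∈ Icc a b, ∀ τ ∈ Icc c d, DifferentiableAt ℝ (fun y => w y τ) y)
    (hdt : ∀ y ∈ Icc a b, ∀ τ ∈ Icc c d, DifferentiableAt ℝ (fun τ => w y τ) τ)
    (hdxt : ∀ y ∈ Icc a b, ∀ τ ∈ Icc c d, DifferentiableAt ℝ (fun τ => pdX w y τ) τ)
    (hx : x ∈ Ioo a b) (hs : s ∈ Ioo c d) :
    HasDerivAt (fun y => pdT w y s) (pdT (pdX w) x s) x := by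
  -- `w y τ = w a τ + ∫_a^y w_x(z, τ) dz`: differentiate under the integral in `τ`, then in `y`.
  have hsub : ∀ {y}, y ∈ Icc a b → Icc a y ⊆ Icc a b := fun hy => Icc_subset_Icc_right hy.2
  have hrep : ∀ y ∈ Icc a b, ∀ τ ∈ Icc c d, w y τ = w a τ + ∫ z in a..y, pdX w z τ := by
    intro y hy τ hτ
    rw [intervalIntegral.integral_eq_sub_of_hasDerivAt (f := fun z => w z τ)
      (f' := fun z => pdX w z τ)
      (fun z hz => (hdx z (hsub hy (by rwa [uIcc_of_le hy.1] at hz)) τ hτ).hasDerivAt)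
      (((hwx.uncurry_right τ hτ).mono (hsub hy)).intervalIntegrable_of_Icc hy.1)]
    ring
  have hpdT : ∀ y ∈ Icc a b, pdT w y s = pdT w a s + ∫ z in a..y, pdT (pdX w) z s := by
    intro y hy
    have hint : HasDerivAt (fun τ => ∫ z in a..y, pdX w z τ) (∫ z in a..y, pdT (pdX w) z s) s := by
      simpa using hasDerivAt_integral_mul_of_continuousOn (K := fun _ => 1)
        (f' := fun τ z => pdT (pdX w) z τ) hy.1 hs
        intervalIntegrable_const
        (fun τ hτ => (hwx.uncurry_right τ (Ioo_subset_Icc_self hτ)).mono (hsub hy))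
        (hwxt.uncurry_flip.mono (prod_mono_right (hsub hy)))
        fun z hz τ hτ => (hdxt z (hsub hy (Ioo_subset_Icc_self hz)) τ
          (Ioo_subset_Icc_self hτ)).hasDerivAt
    refine (((hdt a (left_mem_Icc.2 (hy.1.trans hy.2)) s (Ioo_subset_Icc_self hs)).hasDerivAt.add
      hint).congr_of_eventuallyEq ?_).deriv
    filter_upwards [Icc_mem_nhds hs.1 hs.2] with τ hτ using hrep y hy τ hτ
  have hcont := hwxt.uncurry_right s (Ioo_subset_Icc_self hs)
  refine (HasDerivAt.const_add (pdT w a s) (intervalIntegral.integral_hasDerivAt_right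
    ((hcont.mono (hsub ⟨hx.1.le, hx.2.le⟩)).intervalIntegrable_of_Icc hx.1.le)
    (hcont.mono Ioo_subset_Icc_self |>.stronglyMeasurableAtFilter isOpen_Ioo x hx)
    (hcont.continuousAt (Icc_mem_nhds hx.1 hx.2)))).congr_of_eventuallyEq ?_
  filter_upwards [Icc_mem_nhds hx.1 hx.2] with y hy using hpdT y hy

theorem integral_deriv3_mul_eq {f f₁ f₂ f₃ φ φ₁ φ₂ φ₃ : ℝ → ℝ} {a b : ℝ} (hab : a ≤ b)
    (hf : ∀ x ∈ Icc a b, HasDerivAt f (f₁ x) x) (hf₁ : ∀ x ∈ Icc a b, HasDerivAt f₁ (f₂ x) x)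
    (hf₂ : ∀ x ∈ Icc a b, HasDerivAt f₂ (f₃ x) x) (hφ : ∀ x ∈ Icc a b, HasDerivAt φ (φ₁ x) x)
    (hφ₁ : ∀ x ∈ Icc a b, HasDerivAt φ₁ (φ₂ x) x) (hφ₂ : ∀ x ∈ Icc a b, HasDerivAt φ₂ (φ₃ x) x)
    (hf₃ : ContinuousOn f₃ (Icc a b)) (hφ₃ : ContinuousOn φ₃ (Icc a b)) :
    ∫ x in a..b, f₃ x * φ x = (f₂ b * φ b - f₁ b * φ₁ b + f b * φ₂ b)
      - (f₂ a * φ a - f₁ a * φ₁ a + f a * φ₂ a) - ∫ x in a..b, f x * φ₃ x := by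
  have hfc : ContinuousOn f (Icc a b) := fun x hx => (hf x hx).continuousAt.continuousWithinAt
  have hφc : ContinuousOn φ (Icc a b) := fun x hx => (hφ x hx).continuousAt.continuousWithinAt
  have hint₁ : IntervalIntegrable (fun x => f₃ x * φ x) volume a b :=
    (hf₃.mul hφc).intervalIntegrable_of_Icc hab
  have hint₂ : IntervalIntegrable (fun x => f x * φ₃ x) volume a b :=
    (hfc.mul hφ₃).intervalIntegrable_of_Icc hab
  have hsum : ∫ x in a..b, (f₃ x * φ x + f x * φ₃ x)
      = (f₂ b * φ b - f₁ b * φ₁ b + f b * φ₂ b) - (f₂ a * φ a - f₁ a * φ₁ a + f a * φ₂ a) := by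
    refine intervalIntegral.integral_eq_sub_of_hasDerivAt
      (f := fun x => f₂ x * φ x - f₁ x * φ₁ x + f x * φ₂ x) (fun x hx => ?_) (hint₁.add hint₂)
    rw [uIcc_of_le hab] at hx
    exact ((((hf₂ x hx).mul (hφ x hx)).sub ((hf₁ x hx).mul (hφ₁ x hx))).add
      ((hf x hx).mul (hφ₂ x hx))).congr_deriv (by ring)
  rw [intervalIntegral.integral_add hint₁ hint₂] at hsum
  linarith

/-- No positivity of `∫ φ` is needed: when it vanishes, the left side is `0⁻¹ * _ = 0`. -/
theorem inv_integral_mul_sq_le {f φ : ℝ → ℝ} {a b : ℝ} (hab : a ≤ b)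
    (hf : ContinuousOn f (Icc a b)) (hφ : ContinuousOn φ (Icc a b))
    (hφ0 : ∀ x ∈ Icc a b, 0 ≤ φ x) :
    (∫ x in a..b, φ x)⁻¹ * (∫ x in a..b, f x * φ x) ^ 2 ≤ ∫ x in a..b, f x ^ 2 * φ x := by
  set θ := ∫ x in a..b, φ x
  set B := ∫ x in a..b, f x * φ x
  set c := B / θ
  have hint : ∀ {g : ℝ → ℝ}, ContinuousOn g (Icc a b) → IntervalIntegrable g volume a b :=
    fun hg => hg.intervalIntegrable_of_Icc hab
  have hsq : 0 ≤ ∫ x in a..b, (f x - c) ^ 2 * φ x :=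
    intervalIntegral.integral_nonneg hab fun x hx => mul_nonneg (sq_nonneg _) (hφ0 x hx)
  have hexpand : ∫ x in a..b, (f x - c) ^ 2 * φ x
      = (∫ x in a..b, f x ^ 2 * φ x) - 2 * c * B + c ^ 2 * θ := by
    rw [← intervalIntegral.integral_const_mul, ← intervalIntegral.integral_const_mul,
      ← intervalIntegral.integral_sub (hint (by fun_prop)) (hint (by fun_prop)),
      ← intervalIntegral.integral_add (hint (by fun_prop)) (hint (by fun_prop))]
    exact intervalIntegral.integral_congr fun x _ => by ring
  have hc : θ⁻¹ * B ^ 2 = 2 * c * B - c ^ 2 * θ := by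
    rcases eq_or_ne θ 0 with h | h
    · simp [c, h]
    · simp only [c]
      field_simp
      ring
  linarith

theorem abs_integral_mul_le_of_abs_le {f g : ℝ → ℝ} {a b M : ℝ} (hab : a ≤ b)
    (hf : ContinuousOn f (Icc a b)) (hg : ContinuousOn g (Icc a b))
    (hbound : ∀ x ∈ Icc a b, |f x| ≤ M) :
    |∫ x in a..b, f x * g x| ≤ M * ∫ x in a..b, |g x| := by
  rw [← intervalIntegral.integral_const_mul]
  refine (intervalIntegral.abs_integral_le_integral_abs hab).trans
    (intervalIntegral.integral_mono_on hab ((hf.mul hg).abs.intervalIntegrable_of_Icc hab)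
      ((continuousOn_const.mul hg.abs).intervalIntegrable_of_Icc hab) fun x hx => ?_)
  rw [abs_mul]
  exact mul_le_mul_of_nonneg_right (hbound x hx) (abs_nonneg _)

namespace CReg

variable {n k : ℕ} {u : ℝ → ℝ → ℝ} {L T x t : ℝ}

theorem continuousOn (h : CReg n u L T) (hk : k ≤ n) :
    ContinuousOn (uncurry (pdX^[k] u)) (Icc 0 L ×ˢ Icc 0 T) :=
  h.1 k hk

theorem continuousOn_pdT (h : CReg n u L T) (hk : k ≤ n) :
    ContinuousOn (uncurry (pdT (pdX^[k] u))) (Icc 0 L ×ˢ Icc 0 T) :=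
  h.2.1 k hk

theorem hasDerivAt_pdX (h : CReg n u L T) (hk : k < n) (hx : x ∈ Icc 0 L) (ht : t ∈ Icc 0 T) :
    HasDerivAt (fun y => (pdX^[k] u) y t) ((pdX^[k + 1] u) x t) x := by
  rw [iterate_succ_apply']
  exact (h.2.2.1 k hk x hx t ht).hasDerivAt

theorem hasDerivAt_pdT (h : CReg n u L T) (hk : k ≤ n) (hx : x ∈ Icc 0 L) (ht : t ∈ Icc 0 T) :
    HasDerivAt (fun s => (pdX^[k] u) x s) (pdT (pdX^[k] u) x t) t :=
  (h.2.2.2 k hk x hx t ht).hasDerivAt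

theorem hasDerivAt_pdT_pdX (h : CReg n u L T) (hn : 1 ≤ n) (hx : x ∈ Ioo 0 L)
    (ht : t ∈ Ioo 0 T) : HasDerivAt (fun y => pdT u y t) (pdT (pdX u) x t) x :=
  hasDerivAt_pdT_of_continuousOn_pdT_pdX (h.continuousOn hn) (h.continuousOn_pdT hn)
    (fun y hy τ hτ => h.2.2.1 0 hn y hy τ hτ) (fun y hy τ hτ => h.2.2.2 0 (by omega) y hy τ hτ)
    (fun y hy τ hτ => h.2.2.2 1 hn y hy τ hτ) hx ht

theorem hasDerivAt_capT {α : ℝ} (h : CReg n u L T) (hn : 1 ≤ n) (hα : α < 1) (hx : x ∈ Ioo 0 L)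
    (ht : t ∈ Ioc 0 T) : HasDerivAt (fun y => capT α u y t) (capT α (pdX u) x t) x :=
  hasDerivAt_capT_of_continuousOn hα ht.1.le hx
    ((h.continuousOn_pdT (k := 0) (by omega)).mono (prod_mono_right (Icc_subset_Icc_right ht.2)))
    ((h.continuousOn_pdT hn).mono (prod_mono_right (Icc_subset_Icc_right ht.2)))
    fun s hs y hy => h.hasDerivAt_pdT_pdX hn hy ⟨hs.1, hs.2.trans_le ht.2⟩

end CReg

theorem Csp.hasDerivAt {n k : ℕ} {φ : ℝ → ℝ} {L x : ℝ} (h : Csp n φ L) (hk : k < n)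
    (hx : x ∈ Icc 0 L) : HasDerivAt (deriv^[k] φ) (deriv^[k + 1] φ x) x := by
  rw [iterate_succ_apply']
  exact (h.1 k hk x hx).hasDerivAt

theorem Csp.continuousOn {n : ℕ} {φ : ℝ → ℝ} {L : ℝ} (h : Csp n φ L) (hn : 0 < n) :
    ContinuousOn φ (Icc 0 L) :=
  fun _ hx => (h.hasDerivAt (k := 0) hn hx).continuousAt.continuousWithinAt

noncomputable def burgersGradient (ν : ℝ) (u : ℝ → ℝ → ℝ) (x t : ℝ) : ℝ :=
  -pdX u x t - u x t ^ 2 / (2 * ν)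

namespace CReg

variable {n : ℕ} {ν L T x t : ℝ} {u : ℝ → ℝ → ℝ}

theorem continuousOn_burgersGradient (h : CReg n u L T) (hn : 1 ≤ n) :
    ContinuousOn (uncurry (burgersGradient ν u)) (Icc 0 L ×ˢ Icc 0 T) :=
  (h.continuousOn hn).neg.sub (((h.continuousOn (k := 0) (by omega)).pow 2).div_const _)

theorem hasDerivAt_burgersGradient (h : CReg n u L T) (hn : 1 ≤ n) (hx : x ∈ Icc 0 L)
    (ht : t ∈ Icc 0 T) :
    HasDerivAt (fun s => burgersGradient ν u x s)
      (-pdT (pdX u) x t - 2 * u x t * pdT u x t / (2 * ν)) t := by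
  have hu : HasDerivAt (fun s => u x s) (pdT u x t) t := h.hasDerivAt_pdT (k := 0) (by omega) hx ht
  have hu₁ : HasDerivAt (fun s => pdX u x s) (pdT (pdX u) x t) t := h.hasDerivAt_pdT hn hx ht
  exact (hu₁.fun_neg.fun_sub ((hu.fun_pow 2).div_const (2 * ν))).congr_deriv (by ring)

theorem continuousOn_pdT_burgersGradient (h : CReg n u L T) (hn : 1 ≤ n) :
    ContinuousOn (uncurry (pdT (burgersGradient ν u))) (Icc 0 L ×ˢ Icc 0 T) :=
  ((h.continuousOn_pdT hn).neg.sub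
    (((continuousOn_const.mul (h.continuousOn (k := 0) (by omega))).mul
      (h.continuousOn_pdT (k := 0) (by omega))).div_const (2 * ν))).congr
    fun q hq => (h.hasDerivAt_burgersGradient hn hq.1 hq.2).deriv

theorem capT_burgersGradient {α : ℝ} (h : CReg n u L T) (hn : 1 ≤ n) (hα : α < 1)
    (hx : x ∈ Icc 0 L) (ht : t ∈ Ioc 0 T) :
    capT α (burgersGradient ν u) x t
      = -capT α (pdX u) x t - caputo α (fun s => u x s ^ 2) t / (2 * ν) := by
  have hsub : Icc 0 t ⊆ Icc 0 T := Icc_subset_Icc_right ht.2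
  have hu : ∀ s ∈ Ioo 0 t, HasDerivAt (fun s => u x s) (pdT u x s) s := fun s hs =>
    h.hasDerivAt_pdT (k := 0) (by omega) hx (hsub (Ioo_subset_Icc_self hs))
  have hu₁ : ∀ s ∈ Ioo 0 t, HasDerivAt (fun s => pdX u x s) (pdT (pdX u) x s) s := fun s hs =>
    h.hasDerivAt_pdT hn hx (hsub (Ioo_subset_Icc_self hs))
  have hu_c : ContinuousOn (fun s => u x s) (Icc 0 t) :=
    ((h.continuousOn (k := 0) (by omega)).uncurry_left x hx).mono hsub
  have hu_t : ContinuousOn (pdT u x) (Icc 0 t) :=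
    ((h.continuousOn_pdT (k := 0) (by omega)).uncurry_left x hx).mono hsub
  have hu₁_t : ContinuousOn (pdT (pdX u) x) (Icc 0 t) :=
    ((h.continuousOn_pdT hn).uncurry_left x hx).mono hsub
  have hu_sq : ∀ s ∈ Ioo 0 t, HasDerivAt (fun s => u x s ^ 2 / (2 * ν))
      (2 * u x s * pdT u x s / (2 * ν)) s := fun s hs =>
    (((hu s hs).fun_pow 2).div_const (2 * ν)).congr_deriv (by ring)
  change caputo α (fun s => -pdX u x s - u x s ^ 2 / (2 * ν)) t = _
  rw [caputo_sub hα ht.1.le (fun s hs => (hu₁ s hs).fun_neg) hu₁_t.neg hu_sq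
    (((continuousOn_const.mul hu_c).mul hu_t).div_const _), caputo_neg, caputo_div_const]
  rfl

end CReg

section Burgers

variable {α ν M L T x t : ℝ} {u : ℝ → ℝ → ℝ} {φ : ℝ → ℝ}

theorem capT_pdX_eq_of_burgers (hα : α < 1) (hreg : CReg 3 u L T)
    (hpde : ∀ x ∈ Ioo (0:ℝ) L, ∀ t ∈ Ioc (0:ℝ) T,
      capT α u x t + u x t * pdX u x t = ν * pdX (pdX u) x t)
    (hx : x ∈ Ioo 0 L) (ht : t ∈ Ioc 0 T) :
    capT α (pdX u) x t = ν * (pdX^[3] u) x t - (pdX u x t ^ 2 + u x t * pdX (pdX u) x t) := by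
  have hxI : x ∈ Icc 0 L := Ioo_subset_Icc_self hx
  have htI : t ∈ Icc 0 T := Ioc_subset_Icc_self ht
  have hu : HasDerivAt (fun y => u y t) (pdX u x t) x :=
    hreg.hasDerivAt_pdX (k := 0) (by norm_num) hxI htI
  have hu₁ : HasDerivAt (fun y => pdX u y t) (pdX (pdX u) x t) x :=
    hreg.hasDerivAt_pdX (k := 1) (by norm_num) hxI htI
  have hu₂ : HasDerivAt (fun y => pdX (pdX u) y t) ((pdX^[3] u) x t) x :=
    hreg.hasDerivAt_pdX (k := 2) (by norm_num) hxI htI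
  refine (hreg.hasDerivAt_capT (by norm_num) hα hx ht).unique
    ((((hu₂.const_mul ν).fun_sub (hu.fun_mul hu₁)).congr_deriv (by ring)).congr_of_eventuallyEq ?_)
  filter_upwards [Ioo_mem_nhds hx.1 hx.2] with y hy
  linarith [hpde y hy t ht]

theorem sq_burgersGradient_sub_le_capT (hα : α < 1) (hν : 0 < ν) (hreg : CReg 3 u L T)
    (hpde : ∀ x ∈ Ioo (0:ℝ) L, ∀ t ∈ Ioc (0:ℝ) T,
      capT α u x t + u x t * pdX u x t = ν * pdX (pdX u) x t)
    (hmono : ∀ x ∈ Icc (0:ℝ) L,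
      MonotoneOn (fun s => u x s) (Icc 0 T) ∨ AntitoneOn (fun s => u x s) (Icc 0 T))
    (hx : x ∈ Ioo 0 L) (ht : t ∈ Ioc 0 T) :
    burgersGradient ν u x t ^ 2 - u x t ^ 4 / (4 * ν ^ 2) - ν * (pdX^[3] u) x t
      ≤ capT α (burgersGradient ν u) x t := by
  have hxI : x ∈ Icc 0 L := Ioo_subset_Icc_self hx
  have hsub : Icc 0 t ⊆ Icc 0 T := Icc_subset_Icc_right ht.2
  have hu : ∀ s ∈ Icc 0 t, HasDerivAt (fun s => u x s) (pdT u x s) s := fun s hs =>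
    hreg.hasDerivAt_pdT (k := 0) (by norm_num) hxI (hsub hs)
  have hu_t : ContinuousOn (pdT u x) (Icc 0 t) :=
    ((hreg.continuousOn_pdT (k := 0) (by norm_num)).uncurry_left x hxI).mono hsub
  have hsq : caputo α (fun s => u x s ^ 2) t ≤ 2 * u x t * capT α u x t :=
    caputo_sq_le hα ht.1 hu hu_t ((hmono x hxI).imp (·.mono hsub) (·.mono hsub))
  have hcap : capT α u x t = ν * pdX (pdX u) x t - u x t * pdX u x t := by
    linarith [hpde x hx t ht]
  have hsq' : caputo α (fun s => u x s ^ 2) t / (2 * ν)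
      ≤ u x t * (ν * pdX (pdX u) x t - u x t * pdX u x t) / ν := by
    rw [div_le_div_iff₀ (by positivity) hν, ← hcap]
    nlinarith
  have hid : burgersGradient ν u x t ^ 2 - u x t ^ 4 / (4 * ν ^ 2) - ν * (pdX^[3] u) x t
      = -(ν * (pdX^[3] u) x t - (pdX u x t ^ 2 + u x t * pdX (pdX u) x t))
        - u x t * (ν * pdX (pdX u) x t - u x t * pdX u x t) / ν := by
    unfold burgersGradient
    field_simp
    ring
  rw [hreg.capT_burgersGradient (by norm_num) hα hxI ht, capT_pdX_eq_of_burgers hα hreg hpde hx ht,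
    hid]
  linarith

theorem integral_sq_burgersGradient_sub_mul_le_caputo (hα : α < 1) (hν : 0 < ν) (hL : 0 ≤ L)
    (hreg : CReg 3 u L T)
    (hpde : ∀ x ∈ Ioo (0:ℝ) L, ∀ t ∈ Ioc (0:ℝ) T,
      capT α u x t + u x t * pdX u x t = ν * pdX (pdX u) x t)
    (hmono : ∀ x ∈ Icc (0:ℝ) L,
      MonotoneOn (fun s => u x s) (Icc 0 T) ∨ AntitoneOn (fun s => u x s) (Icc 0 T))
    (hφ : ContinuousOn φ (Icc 0 L)) (hφ0 : ∀ x ∈ Icc (0:ℝ) L, 0 ≤ φ x) (ht : t ∈ Ioc 0 T) :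
    ∫ x in (0:ℝ)..L,
        (burgersGradient ν u x t ^ 2 - u x t ^ 4 / (4 * ν ^ 2) - ν * (pdX^[3] u) x t) * φ x
      ≤ caputo α (fun s => ∫ x in (0:ℝ)..L, burgersGradient ν u x s * φ x) t := by
  have htI : t ∈ Icc 0 T := Ioc_subset_Icc_self ht
  have hsub : Icc 0 L ×ˢ Icc 0 t ⊆ Icc 0 L ×ˢ Icc 0 T := prod_mono_right (Icc_subset_Icc_right ht.2)
  have hv_t := (hreg.continuousOn_pdT_burgersGradient (ν := ν) (by norm_num)).mono hsub
  have hderiv : ∀ x ∈ Icc 0 L, ∀ s ∈ Ioo 0 t,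
      HasDerivAt (burgersGradient ν u x) (pdT (burgersGradient ν u) x s) s := fun x hx s hs =>
    (hreg.hasDerivAt_burgersGradient (by norm_num) hx
      ⟨hs.1.le, hs.2.le.trans ht.2⟩).differentiableAt.hasDerivAt
  have hv := hreg.continuousOn_burgersGradient (ν := ν) (by norm_num)
  rw [caputo_integral_mul hα hL ht.1 (hφ.intervalIntegrable_of_Icc hL)
    (fun s hs => hv.uncurry_right s (mem_Icc.2 ⟨hs.1.le, hs.2.le.trans ht.2⟩)) hv_t hderiv]
  refine intervalIntegral.integral_mono_on_of_le_Ioo hL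
    (ContinuousOn.intervalIntegrable_of_Icc hL ?_)
    (((continuousOn_caputo hα ht.1.le hv_t hderiv).mul hφ).intervalIntegrable_of_Icc hL)
    fun x hx => mul_le_mul_of_nonneg_right
      (sq_burgersGradient_sub_le_capT hα hν hreg hpde hmono hx ht) (hφ0 x (Ioo_subset_Icc_self hx))
  exact ((((hv.uncurry_right t htI).pow 2).sub
    ((((hreg.continuousOn (k := 0) (by norm_num)).uncurry_right t htI).pow 4).div_const _)).sub
    (continuousOn_const.mul ((hreg.continuousOn (k := 3) le_rfl).uncurry_right t htI))).mul hφ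

theorem integral_pdX3_mul_eq (hL : 0 ≤ L) (hreg : CReg 3 u L T) (hφ : Csp 3 φ L)
    (ht : t ∈ Icc 0 T) :
    ∫ x in (0:ℝ)..L, (pdX^[3] u) x t * φ x
      = (pdX (pdX u) L t * φ L - pdX u L t * deriv φ L + u L t * deriv (deriv φ) L)
        - (pdX (pdX u) 0 t * φ 0 - pdX u 0 t * deriv φ 0 + u 0 t * deriv (deriv φ) 0)
        - ∫ x in (0:ℝ)..L, u x t * deriv (deriv (deriv φ)) x :=
  integral_deriv3_mul_eq hL
    (fun x hx => hreg.hasDerivAt_pdX (k := 0) (by norm_num) hx ht)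
    (fun x hx => hreg.hasDerivAt_pdX (k := 1) (by norm_num) hx ht)
    (fun x hx => hreg.hasDerivAt_pdX (k := 2) (by norm_num) hx ht)
    (fun x hx => hφ.hasDerivAt (k := 0) (by norm_num) hx)
    (fun x hx => hφ.hasDerivAt (k := 1) (by norm_num) hx)
    (fun x hx => hφ.hasDerivAt (k := 2) (by norm_num) hx)
    ((hreg.continuousOn (k := 3) le_rfl).uncurry_right t ht) hφ.2

theorem le_integral_sq_burgersGradient_sub_mul (hν : 0 < ν) (hL : 0 ≤ L) (hreg : CReg 3 u L T)
    (hbound : ∀ x ∈ Icc (0:ℝ) L, ∀ t ∈ Icc (0:ℝ) T, |u x t| ≤ M) (hφ : Csp 3 φ L)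
    (hφ0 : ∀ x ∈ Icc (0:ℝ) L, 0 ≤ φ x) (ht : t ∈ Icc 0 T) :
    (∫ x in (0:ℝ)..L, φ x)⁻¹ * (∫ x in (0:ℝ)..L, burgersGradient ν u x t * φ x) ^ 2
      - ν * ((pdX (pdX u) L t * φ L - pdX u L t * deriv φ L + u L t * deriv (deriv φ) L)
        - (pdX (pdX u) 0 t * φ 0 - pdX u 0 t * deriv φ 0 + u 0 t * deriv (deriv φ) 0))
      - (M ^ 4 / (4 * ν ^ 2) * (∫ x in (0:ℝ)..L, φ x)
        + M * ν * ∫ x in (0:ℝ)..L, |deriv (deriv (deriv φ)) x|)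
    ≤ ∫ x in (0:ℝ)..L,
        (burgersGradient ν u x t ^ 2 - u x t ^ 4 / (4 * ν ^ 2) - ν * (pdX^[3] u) x t) * φ x := by
  have hu : ContinuousOn (fun x => u x t) (Icc 0 L) :=
    (hreg.continuousOn (k := 0) (by norm_num)).uncurry_right t ht
  have hu₃ : ContinuousOn (fun x => (pdX^[3] u) x t) (Icc 0 L) :=
    (hreg.continuousOn (k := 3) le_rfl).uncurry_right t ht
  have hv : ContinuousOn (fun x => burgersGradient ν u x t) (Icc 0 L) :=
    (hreg.continuousOn_burgersGradient (by norm_num)).uncurry_right t ht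
  have hφc : ContinuousOn φ (Icc 0 L) := hφ.continuousOn (by norm_num)
  have hint : ∀ {g : ℝ → ℝ}, ContinuousOn g (Icc 0 L) → IntervalIntegrable g volume 0 L :=
    fun hg => hg.intervalIntegrable_of_Icc hL
  have hu4 : ∫ x in (0:ℝ)..L, u x t ^ 4 / (4 * ν ^ 2) * φ x
      ≤ M ^ 4 / (4 * ν ^ 2) * ∫ x in (0:ℝ)..L, φ x := by
    rw [← intervalIntegral.integral_const_mul]
    refine intervalIntegral.integral_mono_on hL (hint (by fun_prop)) (hint (by fun_prop))
      fun x hx => mul_le_mul_of_nonneg_right (div_le_div_of_nonneg_right ?_ (by positivity))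
        (hφ0 x hx)
    simpa [← abs_pow, abs_of_nonneg (by positivity : (0:ℝ) ≤ u x t ^ 4)] using
      pow_le_pow_left₀ (abs_nonneg _) (hbound x hx t ht) 4
  have huφ₃ : |∫ x in (0:ℝ)..L, u x t * deriv (deriv (deriv φ)) x|
      ≤ M * ∫ x in (0:ℝ)..L, |deriv (deriv (deriv φ)) x| :=
    abs_integral_mul_le_of_abs_le hL hu hφ.2 fun x hx => hbound x hx t ht
  rw [show (fun x => (burgersGradient ν u x t ^ 2 - u x t ^ 4 / (4 * ν ^ 2)
      - ν * (pdX^[3] u) x t) * φ x) = fun x => burgersGradient ν u x t ^ 2 * φ x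
        - u x t ^ 4 / (4 * ν ^ 2) * φ x - ν * ((pdX^[3] u) x t * φ x) by ext; ring,
    intervalIntegral.integral_sub (hint (by fun_prop)) (hint (by fun_prop)),
    intervalIntegral.integral_sub (hint (by fun_prop)) (hint (by fun_prop)),
    intervalIntegral.integral_const_mul, integral_pdX3_mul_eq hL hreg hφ ht]
  nlinarith [inv_integral_mul_sq_le hL hv hφc hφ0,
    neg_abs_le (∫ x in (0:ℝ)..L, u x t * deriv (deriv (deriv φ)) x)]

end Burgers

theorem fractional_burgers_gradient_inequality_general
    (α ν M L T : ℝ) (hα : 0 < α ∧ α < 1) (hν : 0 < ν) (hL : 0 < L)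
    (u : ℝ → ℝ → ℝ) (φ : ℝ → ℝ) (θ₁ θ₂ : ℝ) (v : ℝ → ℝ → ℝ) (F Φ : ℝ → ℝ)
    (hreg : CReg 3 u L T)
    (hpde : ∀ x ∈ Ioo (0:ℝ) L, ∀ t ∈ Ioc (0:ℝ) T,
      capT α u x t + u x t * pdX u x t = ν * pdX (pdX u) x t)
    (hbound : ∀ x ∈ Icc (0:ℝ) L, ∀ t ∈ Icc (0:ℝ) T, |u x t| ≤ M)
    (hmono : ∀ x ∈ Icc (0:ℝ) L,
      MonotoneOn (fun s => u x s) (Icc 0 T) ∨ AntitoneOn (fun s => u x s) (Icc 0 T))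
    (hφ : Csp 3 φ L)
    (hφ0 : ∀ x ∈ Icc (0:ℝ) L, 0 ≤ φ x)
    (hθ₁ : θ₁ = (M ^ 4 / (4 * ν ^ 2)) * (∫ x in (0:ℝ)..L, φ x)
      + M * ν * ∫ x in (0:ℝ)..L, |deriv (deriv (deriv φ)) x|)
    (hθ₂ : θ₂ = ∫ x in (0:ℝ)..L, φ x)
    (hv : ∀ x t, v x t = -pdX u x t - (u x t) ^ 2 / (2 * ν))
    (hF : ∀ t, F t = ∫ x in (0:ℝ)..L, v x t * φ x)
    (hΦ : ∀ t, Φ t = -ν * ((pdX (pdX u) L t * φ L - pdX u L t * deriv φ L + u L t * deriv (deriv φ) L)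
      - (pdX (pdX u) 0 t * φ 0 - pdX u 0 t * deriv φ 0 + u 0 t * deriv (deriv φ) 0))) :
    ∀ t ∈ Ioc (0:ℝ) T, θ₂⁻¹ * (F t) ^ 2 + Φ t - θ₁ ≤ caputo α F t := by
  intro t ht
  obtain rfl : v = burgersGradient ν u := funext₂ hv
  obtain rfl : F = fun s => ∫ x in (0:ℝ)..L, burgersGradient ν u x s * φ x := funext hF
  rw [hΦ t, hθ₁, hθ₂]
  linarith [le_integral_sq_burgersGradient_sub_mul hν hL.le hreg hbound hφ hφ0
      (Ioc_subset_Icc_self ht),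
    integral_sq_burgersGradient_sub_mul_le_caputo hα.2 hν hL.le hreg hpde hmono
      (hφ.continuousOn (by norm_num)) hφ0 ht]

/-- Fractional differential inequality for the Burgers gradient functional. -/
theorem fractional_burgers_gradient_inequality
    (α ν M L T : ℝ) (hα : 0 < α ∧ α < 1) (hν : 0 < ν) (hM : 0 < M) (hL : 0 < L) (hT : 0 < T)
    (u : ℝ → ℝ → ℝ) (φ : ℝ → ℝ) (θ₁ θ₂ : ℝ) (v : ℝ → ℝ → ℝ) (F Φ : ℝ → ℝ)
    (hreg : CReg 3 u L T)
    (hpde : ∀ x ∈ Ioo (0:ℝ) L, ∀ t ∈ Ioc (0:ℝ) T,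
      capT α u x t + u x t * pdX u x t = ν * pdX (pdX u) x t)
    (hbound : ∀ x ∈ Icc (0:ℝ) L, ∀ t ∈ Icc (0:ℝ) T, |u x t| ≤ M)
    (hmono : ∀ x ∈ Icc (0:ℝ) L,
      MonotoneOn (fun s => u x s) (Icc 0 T) ∨ AntitoneOn (fun s => u x s) (Icc 0 T))
    (hφ : Csp 3 φ L)
    (hφ0 : ∀ x ∈ Icc (0:ℝ) L, 0 ≤ φ x)
    (hφne : ∃ x ∈ Icc (0:ℝ) L, φ x ≠ 0)
    (hθ₁ : θ₁ = (M ^ 4 / (4 * ν ^ 2)) * (∫ x in (0:ℝ)..L, φ x)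
      + M * ν * ∫ x in (0:ℝ)..L, |deriv (deriv (deriv φ)) x|)
    (hθ₂ : θ₂ = ∫ x in (0:ℝ)..L, φ x)
    (hv : ∀ x t, v x t = -pdX u x t - (u x t) ^ 2 / (2 * ν))
    (hF : ∀ t, F t = ∫ x in (0:ℝ)..L, v x t * φ x)
    (hΦ : ∀ t, Φ t = -ν * ((pdX (pdX u) L t * φ L - pdX u L t * deriv φ L + u L t * deriv (deriv φ) L)
      - (pdX (pdX u) 0 t * φ 0 - pdX u 0 t * deriv φ 0 + u 0 t * deriv (deriv φ) 0))) :
    ∀ t ∈ Ioc (0:ℝ) T, θ₂⁻¹ * (F t) ^ 2 + Φ t - θ₁ ≤ caputo α F t :=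
  fractional_burgers_gradient_inequality_general α ν M L T hα hν hL u φ θ₁ θ₂ v F Φ hreg hpde hbound
    hmono hφ hφ0 hθ₁ hθ₂ hv hF hΦ
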